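/- arXiv:1810.00015 — 2 statements merged into one kernel-verified Lean document; each statement's English description precedes it below -/
import Mathlib

section
/- Let p and q be powers of 2 with q ≤ p^{2m}, let n = (p^{2m}−1)/(p−1), and let C ⊆ F_p^n be an additive code that is completely regular with covering radius 3 and intersection array {p^{2m}−1, p^{2m}−q, 1; 1, q, p^{2m}−1}. Then for every k that is a power of 2 with 1 ≤ k ≤ p^{2m}/q − 1, there exists an ADDITIVE code B_k ⊆ F_p^n (a subgroup of (F_p^n, +)) that is a union of k cosets of C and is completely regular with covering radius 3 and intersection array {p^{2m}−1, p^{2m}−kq, 1; 1, kq, p^{2m}−1}. -/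
open Finset

/-- Hamming distance from a word to a code. -/
noncomputable def distToCode {F ι : Type*} [Fintype ι] [DecidableEq F]
    (C : Set (ι → F)) (x : ι → F) : ℕ :=
  sInf {d | ∃ c ∈ C, hammingDist x c = d}

/-- A code is completely regular with covering radius `ρ` and intersection array
`{b 0, …, b (ρ-1); c 1, …, c ρ}`. -/
def IsCompletelyRegular {F ι : Type*} [Fintype ι] [DecidableEq F]
    (C : Set (ι → F)) (ρ : ℕ) (b c : ℕ → ℕ) : Prop :=
  (∀ x, distToCode C x ≤ ρ) ∧ (∃ x, distToCode C x = ρ) ∧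
    ∀ i ≤ ρ, ∀ x, distToCode C x = i →
      (i < ρ → {y | hammingDist x y = 1 ∧ distToCode C y = i + 1}.ncard = b i) ∧
      (1 ≤ i → {y | hammingDist x y = 1 ∧ distToCode C y = i - 1}.ncard = c i)

/-!
Write `d` for the distance to `C` and `D = {x | d x = 0 ∨ d x = 3}`. Spheres of radius one have
`p^{2m} - 1` words, so `b₀` and `c₃` say that every neighbour of a codeword is at distance 1 and
every neighbour of a word at distance 3 is at distance 2; together with `c₁ = b₂ = 1` this forces
two words of `D` at Hamming distance at most 2 to coincide. Hence `D` is an additive code, and no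
word is within distance 1 of two different cosets of `C` contained in `D`. Double counting the
edges between consecutive distance classes gives `|D| q = p^{2m} |C|`, so in characteristic 2 there
is an additive code `C ≤ B < D` made of `k` cosets of `C`. The distance from `x ∉ D` to `B` is the
least distance from `x` to one of these cosets, at most one of which is at distance 1, so the
intersection numbers of `B` are sums of those of `C` over the cosets.
-/

theorem natCard_eq_card_filter {α : Type*} [Fintype α] {s : Set α} {p : α → Prop} [DecidablePred p]
    (h : ∀ x, x ∈ s ↔ p x) : Nat.card s = #{x | p x} := by
  rw [Nat.card_congr (Equiv.subtypeEquivRight h), Nat.card_eq_fintype_card, Fintype.card_subtype]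

section AddCommGroup

variable {G : Type*} [AddCommGroup G]

theorem mem_iff_exists_sub_mem_of_eq_iUnion {C B : AddSubgroup G} {R : Finset G}
    (hR : (B : Set G) = ⋃ r ∈ R, (fun v => r + v) '' (C : Set G)) {b : G} :
    b ∈ B ↔ ∃ r ∈ R, b - r ∈ C := by
  rw [← SetLike.mem_coe, hR]
  simp [neg_add_eq_sub]

theorem mem_of_mem_of_eq_iUnion {C B : AddSubgroup G} {R : Finset G}
    (hR : (B : Set G) = ⋃ r ∈ R, (fun v => r + v) '' (C : Set G)) {r : G} (hr : r ∈ R) :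
    r ∈ B :=
  (mem_iff_exists_sub_mem_of_eq_iUnion hR).2 ⟨r, hr, by simp [C.zero_mem]⟩

theorem exists_finset_eq_iUnion [Finite G] {C B : AddSubgroup G} (hCB : C ≤ B) :
    ∃ R : Finset G, R.card * Nat.card C = Nat.card B ∧ (∀ x ∈ R, ∀ y ∈ R, x ≠ y → x - y ∉ C) ∧
      (B : Set G) = ⋃ x ∈ R, (fun v => x + v) '' (C : Set G) := by
  classical
  let C' := C.addSubgroupOf B
  have : Fintype (B ⧸ C') := Fintype.ofFinite _
  have hout : ∀ b : B, ((b : G) - (Quotient.out (b : B ⧸ C') : B)) ∈ C := fun b => by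
    have := QuotientAddGroup.eq.1 (QuotientAddGroup.out_eq' (b : B ⧸ C'))
    simpa [C', AddSubgroup.mem_addSubgroupOf, neg_add_eq_sub] using this
  let rep : B ⧸ C' → G := fun a => (Quotient.out a : B)
  have hrep : Function.Injective rep := fun a a' h =>
    Quotient.out_injective (Subtype.val_injective h)
  refine ⟨univ.image rep, ?_, ?_, ?_⟩
  · rw [card_image_of_injective _ hrep, card_univ,
      ← Nat.card_eq_fintype_card, ← Nat.card_congr (AddSubgroup.addSubgroupOfEquivOfLe hCB).toEquiv,
      ← AddSubgroup.card_eq_card_quotient_mul_card_addSubgroup]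
  · simp only [mem_image, mem_univ, true_and]
    rintro _ ⟨a, rfl⟩ _ ⟨a', rfl⟩ hne hC
    refine hne (congrArg rep ?_)
    rw [← QuotientAddGroup.out_eq' a, ← QuotientAddGroup.out_eq' a', QuotientAddGroup.eq,
      AddSubgroup.mem_addSubgroupOf]
    simpa [neg_add_eq_sub] using C.neg_mem hC
  · ext x
    simp only [SetLike.mem_coe, Set.mem_iUnion, Set.mem_image, mem_image, mem_univ, true_and]
    constructor
    · intro hx
      exact ⟨_, ⟨_, rfl⟩, _, hout ⟨x, hx⟩, add_sub_cancel _ _⟩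
    · rintro ⟨_, ⟨a, rfl⟩, c, hc, rfl⟩
      exact B.add_mem (Quotient.out a).2 (hCB hc)

theorem exists_addSubgroup_card_eq_two_mul [Finite G] (h2 : ∀ x : G, x + x = 0)
    {B D : AddSubgroup G} (hBD : B ≤ D) {g : G} (hgD : g ∈ D) (hgB : g ∉ B) :
    ∃ B' : AddSubgroup G, B ≤ B' ∧ B' ≤ D ∧ Nat.card B' = 2 * Nat.card B := by
  have hneg : ∀ x : G, -x = x := fun x => neg_eq_of_add_eq_zero_right (h2 x)
  let B' := AddSubgroup.ofSub ((B : Set G) ∪ (g + ·) '' B) ⟨0, Or.inl B.zero_mem⟩ <| by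
    rintro a (ha | ⟨x, hx, rfl⟩) b (hb | ⟨y, hy, rfl⟩) <;> rw [hneg]
    · exact Or.inl (B.add_mem ha hb)
    · exact Or.inr ⟨a + y, B.add_mem ha hy, by beta_reduce; abel⟩
    · exact Or.inr ⟨x + b, B.add_mem hx hb, by beta_reduce; abel⟩
    · exact Or.inl (by rw [add_add_add_comm, h2, zero_add]; exact B.add_mem hx hy)
  refine ⟨B', fun x hx => Or.inl hx, ?_, ?_⟩
  · rintro _ (hx | ⟨x, hx, rfl⟩)
    · exact hBD hx
    · exact D.add_mem hgD (hBD hx)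
  · have hdisj : Disjoint (B : Set G) ((g + ·) '' B) := Set.disjoint_left.2 fun x hx ⟨y, hy, hyx⟩ =>
      hgB (by rw [eq_sub_of_add_eq hyx]; exact B.sub_mem hx hy)
    rw [show Nat.card B' = ((B : Set G) ∪ (g + ·) '' B).ncard from Nat.card_coe_set_eq _,
      Set.ncard_union_eq hdisj, Set.ncard_image_of_injective _ (add_right_injective g),
      ← Nat.card_coe_set_eq, two_mul]
    rfl

theorem exists_addSubgroup_card_eq_two_pow_mul [Finite G] (h2 : ∀ x : G, x + x = 0)
    {C D : AddSubgroup G} (hCD : C ≤ D) {j : ℕ} (hj : 2 ^ j * Nat.card C ≤ Nat.card D) :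
    ∃ B : AddSubgroup G, C ≤ B ∧ B ≤ D ∧ Nat.card B = 2 ^ j * Nat.card C := by
  induction j with
  | zero => exact ⟨C, le_rfl, hCD, by simp⟩
  | succ j ih =>
    have hC : 0 < Nat.card C := Nat.card_pos
    have h2j : 0 < 2 ^ j := by positivity
    rw [pow_succ] at hj
    obtain ⟨B, hCB, hBD, hB⟩ := ih (by nlinarith)
    obtain ⟨g, hgD, hgB⟩ := SetLike.exists_of_lt <| lt_of_le_of_ne hBD <| by
      rintro rfl
      nlinarith
    obtain ⟨B', hBB', hB'D, hB'⟩ := exists_addSubgroup_card_eq_two_mul h2 hBD hgD hgB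
    exact ⟨B', hCB.trans hBB', hB'D, by rw [hB', hB, pow_succ]; ring⟩

end AddCommGroup

theorem add_self_eq_zero_of_card_eq_two_pow {K : Type*} [Field K] [Fintype K] {s : ℕ}
    (h : Fintype.card K = 2 ^ s) (a : K) : a + a = 0 := by
  have h2 : (2 : K) = 0 :=
    eq_zero_of_pow_eq_zero (n := s) (by simpa [h] using FiniteField.cast_card_eq_zero K)
  rw [← two_mul, h2, zero_mul]

section Words

variable {ι F : Type*} [Fintype ι] [DecidableEq F]

theorem hammingDist_update_self_left [DecidableEq ι] {x : ι → F} {i : ι} {a : F} (ha : a ≠ x i) :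
    hammingDist x (Function.update x i a) = 1 := by
  rw [hammingDist, Finset.card_eq_one]
  refine ⟨i, Finset.ext fun j => ?_⟩
  by_cases hj : j = i
  · subst hj; simp [ha.symm]
  · simp [hj]

theorem hammingDist_eq_one_iff [DecidableEq ι] {x y : ι → F} :
    hammingDist x y = 1 ↔ ∃ i, ∃ a ≠ x i, Function.update x i a = y := by
  refine ⟨fun h => ?_, ?_⟩
  · obtain ⟨i, hi⟩ := Finset.card_eq_one.1 h
    have hdiff : ∀ j, x j ≠ y j ↔ j = i := fun j => by
      simpa using Finset.ext_iff.1 hi j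
    refine ⟨i, y i, ((hdiff i).2 rfl).symm, funext fun j => ?_⟩
    by_cases hj : j = i
    · subst hj; simp
    · rw [Function.update_of_ne hj]
      exact not_not.1 ((not_congr (hdiff j)).2 hj)
  · rintro ⟨i, a, ha, rfl⟩
    exact hammingDist_update_self_left ha

theorem exists_hammingDist_eq_one_of_hammingDist_eq_two [DecidableEq ι] {x y : ι → F}
    (h : hammingDist x y = 2) : ∃ z, hammingDist x z = 1 ∧ hammingDist z y = 1 := by
  obtain ⟨i, hi⟩ : ∃ i, x i ≠ y i := by
    by_contra! hxy
    simp [funext hxy] at h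
  refine ⟨Function.update x i (y i), hammingDist_update_self_left hi.symm, ?_⟩
  have hsplit : hammingDist x y = hammingDist (Function.update x i (y i)) y + 1 := by
    simp only [hammingDist]
    rw [← Finset.card_insert_of_notMem (s := {j | Function.update x i (y i) j ≠ y j}) (a := i)
      (by simp)]
    congr 1
    ext j
    by_cases hj : j = i
    · subst hj; simp [hi]
    · simp [hj]
  omega

theorem card_hammingDist_eq_one [DecidableEq ι] [Fintype F] (x : ι → F) :
    #{y | hammingDist x y = 1} = Fintype.card ι * (Fintype.card F - 1) := by
  have himage : ({y | hammingDist x y = 1} : Finset (ι → F)) =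
      (Finset.univ.sigma fun i => Finset.univ.erase (x i)).image
        fun p => Function.update x p.1 p.2 := by
    ext y
    simp [hammingDist_eq_one_iff]
  rw [himage, Finset.card_image_of_injOn, Finset.card_sigma]
  · simp
  · rintro ⟨i, a⟩ hia ⟨j, b⟩ hjb hij
    simp only [Finset.coe_sigma, Set.mem_sigma_iff, Finset.coe_univ, Set.mem_univ,
      Finset.coe_erase, Set.mem_sdiff, Set.mem_singleton_iff, true_and] at hia hjb
    have hji : j = i := by
      by_contra hne
      have := congrFun hij i
      simp [Function.update_of_ne (Ne.symm hne)] at this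
      exact hia this
    subst hji
    simpa using congrFun hij j

theorem hammingDist_sub_right [AddCommGroup F] (x y z : ι → F) :
    hammingDist (x - z) (y - z) = hammingDist x y := by
  rw [hammingDist_eq_hammingNorm, hammingDist_eq_hammingNorm]
  congr 1
  abel

section distToCode

variable {C : Set (ι → F)}

theorem distToCode_le_hammingDist {c : ι → F} (hc : c ∈ C) (x : ι → F) :
    distToCode C x ≤ hammingDist x c :=
  Nat.sInf_le ⟨c, hc, rfl⟩

theorem exists_mem_hammingDist_eq_distToCode (hC : C.Nonempty) (x : ι → F) :
    ∃ c ∈ C, hammingDist x c = distToCode C x :=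
  let ⟨c, hc⟩ := hC
  Nat.sInf_mem (s := {d | ∃ c ∈ C, hammingDist x c = d}) ⟨_, c, hc, rfl⟩

theorem distToCode_eq_zero_iff (hC : C.Nonempty) {x : ι → F} : distToCode C x = 0 ↔ x ∈ C := by
  refine ⟨fun h => ?_, fun hx => Nat.le_zero.1 ?_⟩
  · obtain ⟨c, hc, hxc⟩ := exists_mem_hammingDist_eq_distToCode hC x
    rw [h, hammingDist_eq_zero] at hxc
    exact hxc ▸ hc
  · simpa using distToCode_le_hammingDist hx x

theorem distToCode_le_add_hammingDist (hC : C.Nonempty) (x y : ι → F) :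
    distToCode C x ≤ distToCode C y + hammingDist x y := by
  obtain ⟨c, hc, hyc⟩ := exists_mem_hammingDist_eq_distToCode hC y
  calc distToCode C x ≤ hammingDist x c := distToCode_le_hammingDist hc x
    _ ≤ hammingDist x y + hammingDist y c := hammingDist_triangle x y c
    _ = distToCode C y + hammingDist x y := by rw [hyc, add_comm]

end distToCode

section AddSubgroup

variable [AddCommGroup F] {C B : AddSubgroup (ι → F)}

theorem AddSubgroup.distToCode_eq_zero_iff (C : AddSubgroup (ι → F)) {x : ι → F} :
    distToCode C x = 0 ↔ x ∈ C :=
  _root_.distToCode_eq_zero_iff (ZeroMemClass.coe_nonempty C)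

theorem distToCode_le_distToCode_sub (hCB : C ≤ B) {b : ι → F} (hb : b ∈ B) (x : ι → F) :
    distToCode B x ≤ distToCode C (x - b) := by
  obtain ⟨c, hc, hxc⟩ := exists_mem_hammingDist_eq_distToCode ⟨0, C.zero_mem⟩ (x - b)
  calc distToCode B x ≤ hammingDist x (c + b) := distToCode_le_hammingDist (B.add_mem (hCB hc) hb) x
    _ = distToCode C (x - b) := by
      rw [← hxc, ← hammingDist_sub_right x (c + b) b, add_sub_cancel_right]

theorem exists_mem_distToCode_sub_eq (hCB : C ≤ B) (x : ι → F) :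
    ∃ b ∈ B, distToCode C (x - b) = distToCode B x := by
  obtain ⟨b, hb, hxb⟩ := exists_mem_hammingDist_eq_distToCode ⟨0, B.zero_mem⟩ x
  refine ⟨b, hb, le_antisymm ?_ (distToCode_le_distToCode_sub hCB hb x)⟩
  calc distToCode C (x - b) ≤ hammingDist (x - b) 0 := distToCode_le_hammingDist C.zero_mem _
    _ = distToCode B x := by rw [← sub_self b, hammingDist_sub_right, hxb]

theorem distToCode_sub_mem {c : ι → F} (hc : c ∈ C) (x : ι → F) :
    distToCode C (x - c) = distToCode C x := by
  refine le_antisymm ?_ (distToCode_le_distToCode_sub le_rfl hc x)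
  simpa using distToCode_le_distToCode_sub le_rfl (C.neg_mem hc) (x - c)

theorem distToCode_add_mem {c : ι → F} (hc : c ∈ C) (x : ι → F) :
    distToCode C (x + c) = distToCode C x := by
  simpa using distToCode_sub_mem (C.neg_mem hc) x

end AddSubgroup

section nbrCount

variable [DecidableEq ι] [Fintype F]

noncomputable def nbrCount (C : Set (ι → F)) (x : ι → F) (j : ℕ) : ℕ :=
  #{y | hammingDist x y = 1 ∧ distToCode C y = j}

variable {C : Set (ι → F)}

theorem ncard_eq_nbrCount (x : ι → F) (j : ℕ) :
    {y | hammingDist x y = 1 ∧ distToCode C y = j}.ncard = nbrCount C x j := by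
  rw [nbrCount, ← Set.ncard_coe_finset]
  simp

theorem isCompletelyRegular_iff_nbrCount {ρ : ℕ} {b c : ℕ → ℕ} :
    IsCompletelyRegular C ρ b c ↔ (∀ x, distToCode C x ≤ ρ) ∧ (∃ x, distToCode C x = ρ) ∧
      (∀ x i, distToCode C x = i → i < ρ → nbrCount C x (i + 1) = b i) ∧
      (∀ x i, distToCode C x = i + 1 → i + 1 ≤ ρ → nbrCount C x i = c (i + 1)) := by
  simp only [IsCompletelyRegular, ncard_eq_nbrCount]
  refine and_congr_right fun _ => and_congr_right fun _ => ⟨fun h => ⟨?_, ?_⟩, fun h => ?_⟩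
  · exact fun x i hx hi => (h i hi.le x hx).1 hi
  · exact fun x i hx hi => (h (i + 1) hi x hx).2 (by omega)
  · rintro i hi x rfl
    refine ⟨h.1 x _ rfl, fun h1 => ?_⟩
    obtain ⟨i, hi'⟩ : ∃ i', distToCode C x = i' + 1 := ⟨_, (Nat.sub_add_cancel h1).symm⟩
    simpa [hi'] using h.2 x i hi' (by omega)

theorem sum_nbrCount {ρ : ℕ} (hle : ∀ y, distToCode C y ≤ ρ) (x : ι → F) :
    ∑ j ∈ range (ρ + 1), nbrCount C x j = Fintype.card ι * (Fintype.card F - 1) := by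
  rw [← card_hammingDist_eq_one x, card_eq_sum_card_fiberwise (f := distToCode C)
    (t := range (ρ + 1)) fun y _ => by simpa [Nat.lt_succ_iff] using hle y]
  simp [nbrCount, filter_filter]

theorem nbrCount_eq_card_iff {x : ι → F} {j : ℕ} :
    nbrCount C x j = Fintype.card ι * (Fintype.card F - 1) ↔
      ∀ y, hammingDist x y = 1 → distToCode C y = j := by
  rw [← card_hammingDist_eq_one x, nbrCount, ← filter_filter, card_filter_eq_iff]
  simp

theorem nbrCount_eq_zero (hC : C.Nonempty) {x : ι → F} {j : ℕ}
    (h : j + 1 < distToCode C x ∨ distToCode C x + 1 < j) : nbrCount C x j = 0 := by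
  rw [nbrCount, card_eq_zero, filter_eq_empty_iff]
  rintro y - ⟨hxy, rfl⟩
  have := distToCode_le_add_hammingDist hC x y
  have := distToCode_le_add_hammingDist hC y x
  rw [hammingDist_comm] at this
  omega

theorem nbrCount_sub [AddCommGroup F] (x r : ι → F) (j : ℕ) :
    nbrCount C (x - r) j = #{y | hammingDist x y = 1 ∧ distToCode C (y - r) = j} := by
  refine card_nbij' (· + r) (· - r) ?_ ?_ ?_ ?_ <;> intro y <;>
    simp [← hammingDist_sub_right x _ r]

theorem card_mul_eq_card_mul_of_nbrCount {i b c : ℕ}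
    (hb : ∀ x, distToCode C x = i → nbrCount C x (i + 1) = b)
    (hc : ∀ y, distToCode C y = i + 1 → nbrCount C y i = c) :
    #{x | distToCode C x = i} * b = #{x | distToCode C x = i + 1} * c := by
  refine card_mul_eq_card_mul (fun x y => hammingDist x y = 1) (fun x hx => ?_) fun y hy => ?_
  · rw [← hb x (mem_filter.1 hx).2, nbrCount, bipartiteAbove, filter_filter]
    simp only [and_comm]
  · rw [← hc y (mem_filter.1 hy).2, nbrCount, bipartiteBelow, filter_filter]
    simp only [and_comm, hammingDist_comm]

theorem one_lt_nbrCount {z x y : ι → F} {j : ℕ}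
    (hzx : hammingDist z x = 1) (hx : distToCode C x = j) (hzy : hammingDist z y = 1)
    (hy : distToCode C y = j) (hxy : x ≠ y) : 1 < nbrCount C z j :=
  one_lt_card.2 ⟨x, by simp [hzx, hx], y, by simp [hzy, hy], hxy⟩

end nbrCount

def bArray (N q : ℕ) : ℕ → ℕ := fun i => if i = 0 then N - 1 else if i = 1 then N - q else 1

def cArray (N q : ℕ) : ℕ → ℕ := fun i => if i = 1 then 1 else if i = 2 then q else N - 1

section Array

variable [DecidableEq ι] [AddCommGroup F] [Fintype F] {C : AddSubgroup (ι → F)} {N q : ℕ}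

theorem distToCode_eq_one_of_eq_zero
    (hCR : IsCompletelyRegular (C : Set (ι → F)) 3 (bArray N q) (cArray N q))
    (hsphere : Fintype.card ι * (Fintype.card F - 1) = N - 1) {x y : ι → F}
    (hx : distToCode C x = 0) (hxy : hammingDist x y = 1) : distToCode C y = 1 := by
  obtain ⟨-, -, hb, -⟩ := isCompletelyRegular_iff_nbrCount.1 hCR
  exact nbrCount_eq_card_iff.1 (hsphere ▸ hb x 0 hx (by norm_num)) y hxy

theorem distToCode_eq_two_of_eq_three
    (hCR : IsCompletelyRegular (C : Set (ι → F)) 3 (bArray N q) (cArray N q))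
    (hsphere : Fintype.card ι * (Fintype.card F - 1) = N - 1) {x y : ι → F}
    (hx : distToCode C x = 3) (hxy : hammingDist x y = 1) : distToCode C y = 2 := by
  obtain ⟨-, -, -, hc⟩ := isCompletelyRegular_iff_nbrCount.1 hCR
  exact nbrCount_eq_card_iff.1 (hsphere ▸ hc x 2 hx (by norm_num)) y hxy

theorem eq_of_hammingDist_le_two
    (hCR : IsCompletelyRegular (C : Set (ι → F)) 3 (bArray N q) (cArray N q))
    (hsphere : Fintype.card ι * (Fintype.card F - 1) = N - 1) {x y : ι → F}
    (hx : distToCode C x = 0 ∨ distToCode C x = 3) (hy : distToCode C y = 0 ∨ distToCode C y = 3)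
    (hxy : hammingDist x y ≤ 2) : x = y := by
  obtain ⟨-, -, hb, hc⟩ := isCompletelyRegular_iff_nbrCount.1 hCR
  have hC : (C : Set (ι → F)).Nonempty := ⟨0, C.zero_mem⟩
  interval_cases h : hammingDist x y
  · exact hammingDist_eq_zero.1 h
  · rcases hx with hx | hx
    · have := distToCode_eq_one_of_eq_zero hCR hsphere hx h
      omega
    · have := distToCode_eq_two_of_eq_three hCR hsphere hx h
      omega
  · obtain ⟨z, hxz, hzy⟩ := exists_hammingDist_eq_one_of_hammingDist_eq_two h
    have hzx : hammingDist z x = 1 := by rwa [hammingDist_comm]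
    have hne : x ≠ y := hammingDist_ne_zero.1 (by omega)
    have hyz : hammingDist y z = 1 := by rwa [hammingDist_comm]
    have := distToCode_le_add_hammingDist hC y z
    have := distToCode_le_add_hammingDist hC z y
    exfalso
    rcases hx with hx | hx
    · have hz := distToCode_eq_one_of_eq_zero hCR hsphere hx hxz
      have := one_lt_nbrCount hzx hx hzy (by omega) hne
      rw [hc z 0 hz (by norm_num)] at this
      exact this.false
    · have hz := distToCode_eq_two_of_eq_three hCR hsphere hx hxz
      have := one_lt_nbrCount hzx hx hzy (by omega) hne
      rw [hb z 2 hz (by norm_num)] at this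
      exact this.false

theorem exists_addSubgroup_mem_iff
    (hCR : IsCompletelyRegular (C : Set (ι → F)) 3 (bArray N q) (cArray N q))
    (hsphere : Fintype.card ι * (Fintype.card F - 1) = N - 1) :
    ∃ D : AddSubgroup (ι → F), ∀ x, x ∈ D ↔ distToCode C x = 0 ∨ distToCode C x = 3 := by
  have hC : (C : Set (ι → F)).Nonempty := ⟨0, C.zero_mem⟩
  refine ⟨AddSubgroup.ofSub {x | distToCode C x = 0 ∨ distToCode C x = 3}
    ⟨0, Or.inl (C.distToCode_eq_zero_iff.2 C.zero_mem)⟩ fun x hx y hy => ?_, fun x => Iff.rfl⟩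
  rw [← sub_eq_add_neg]
  by_contra hxy
  simp only [Set.mem_ofPred_eq, not_or] at hx hy hxy
  obtain ⟨c, hc, hdc⟩ := exists_mem_hammingDist_eq_distToCode hC (x - y)
  have hle := hCR.1 (x - y)
  have : x = y + c := by
    refine eq_of_hammingDist_le_two hCR hsphere hx (by rwa [distToCode_add_mem hc]) ?_
    rw [← hammingDist_sub_right x _ y, add_sub_cancel_left]
    omega
  exact hxy.1 (C.distToCode_eq_zero_iff.2 (by rwa [this, add_sub_cancel_left]))

theorem sub_mem_of_distToCode_sub_eq
    (hCR : IsCompletelyRegular (C : Set (ι → F)) 3 (bArray N q) (cArray N q))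
    (hsphere : Fintype.card ι * (Fintype.card F - 1) = N - 1) {D : AddSubgroup (ι → F)}
    (hD : ∀ x, x ∈ D ↔ distToCode C x = 0 ∨ distToCode C x = 3) {f f' v : ι → F}
    (hf : f ∈ D) (hf' : f' ∈ D) (h : distToCode C (v - f) = distToCode C (v - f'))
    (h1 : distToCode C (v - f) ≤ 1) : f - f' ∈ C := by
  have hC : (C : Set (ι → F)).Nonempty := ⟨0, C.zero_mem⟩
  have hCD : C ≤ D := fun c hc => (hD c).2 (Or.inl (C.distToCode_eq_zero_iff.2 hc))
  obtain ⟨c, hc, hvc⟩ := exists_mem_hammingDist_eq_distToCode hC (v - f)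
  obtain ⟨c', hc', hvc'⟩ := exists_mem_hammingDist_eq_distToCode hC (v - f')
  have hfar : f + c = f' + c' := by
    refine eq_of_hammingDist_le_two hCR hsphere ((hD _).1 (D.add_mem hf (hCD hc)))
      ((hD _).1 (D.add_mem hf' (hCD hc'))) ?_
    calc hammingDist (f + c) (f' + c') ≤ hammingDist (f + c) v + hammingDist v (f' + c') :=
          hammingDist_triangle _ _ _
      _ = hammingDist (v - f) c + hammingDist (v - f') c' := by
          rw [← hammingDist_sub_right (f + c) v f, ← hammingDist_sub_right v (f' + c') f',
            add_sub_cancel_left, add_sub_cancel_left, hammingDist_comm c]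
      _ ≤ 2 := by omega
  rw [show f - f' = c' - c by rw [sub_eq_sub_iff_add_eq_add, hfar, add_comm]]
  exact C.sub_mem hc' hc

theorem card_mul_eq_mul_card
    (hCR : IsCompletelyRegular (C : Set (ι → F)) 3 (bArray N q) (cArray N q))
    {D : AddSubgroup (ι → F)} (hD : ∀ x, x ∈ D ↔ distToCode C x = 0 ∨ distToCode C x = 3)
    (hqN : q ≤ N) (hN : 1 < N) : Nat.card D * q = N * Nat.card C := by
  obtain ⟨-, -, hb, hc⟩ := isCompletelyRegular_iff_nbrCount.1 hCR
  set L : ℕ → ℕ := fun i => #{x | distToCode (C : Set (ι → F)) x = i}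
  have h01 : L 0 * (N - 1) = L 1 * 1 :=
    card_mul_eq_card_mul_of_nbrCount (fun x hx => hb x 0 hx (by norm_num))
      fun y hy => hc y 0 hy (by norm_num)
  have h12 : L 1 * (N - q) = L 2 * q :=
    card_mul_eq_card_mul_of_nbrCount (fun x hx => hb x 1 hx (by norm_num))
      fun y hy => hc y 1 hy (by norm_num)
  have h23 : L 2 * 1 = L 3 * (N - 1) :=
    card_mul_eq_card_mul_of_nbrCount (fun x hx => hb x 2 hx (by norm_num))
      fun y hy => hc y 2 hy (by norm_num)
  have hcardC : Nat.card C = L 0 :=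
    natCard_eq_card_filter fun x => C.distToCode_eq_zero_iff.symm
  have hcardD : Nat.card D = L 0 + L 3 := by
    rw [show Nat.card D = _ from natCard_eq_card_filter hD, filter_or,
      card_union_of_disjoint (disjoint_filter.2 fun _ _ => by omega)]
  have h03 : L 0 * (N - q) = L 3 * q := by
    refine Nat.eq_of_mul_eq_mul_left (show 0 < N - 1 by omega) ?_
    calc (N - 1) * (L 0 * (N - q)) = L 1 * (N - q) := by rw [← mul_one (L 1), ← h01]; ring
      _ = (N - 1) * (L 3 * q) := by rw [h12, ← mul_one (L 2), h23]; ring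
  rw [hcardC, hcardD, add_mul, ← h03, ← mul_add, Nat.add_sub_cancel' hqN, mul_comm]

end Array

section Extension

variable [AddCommGroup F] {C B D : AddSubgroup (ι → F)}

theorem distToCode_le_distToCode (hCB : C ≤ B) (x : ι → F) :
    distToCode B x ≤ distToCode C x := by
  simpa using distToCode_le_distToCode_sub hCB B.zero_mem x

theorem distToCode_eq_three_of_mem_of_notMem
    (hD : ∀ x, x ∈ D ↔ distToCode C x = 0 ∨ distToCode C x = 3) (hCB : C ≤ B) (hBD : B ≤ D)
    {x : ι → F} (hx : x ∈ D) (hxB : x ∉ B) : distToCode B x = 3 := by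
  obtain ⟨b, hb, hxb⟩ := exists_mem_distToCode_sub_eq hCB x
  have hne : distToCode C (x - b) ≠ 0 := fun h => hxB <| by
    simpa using B.add_mem (hCB (C.distToCode_eq_zero_iff.1 h)) hb
  have := (hD _).1 (D.sub_mem hx (hBD hb))
  omega

theorem distToCode_eq_one_or_two_of_notMem (hle : ∀ x : ι → F, distToCode C x ≤ 3)
    (hD : ∀ x, x ∈ D ↔ distToCode C x = 0 ∨ distToCode C x = 3) (hCB : C ≤ B) (hBD : B ≤ D)
    {x : ι → F} (hx : x ∉ D) : distToCode B x = 1 ∨ distToCode B x = 2 := by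
  obtain ⟨b, hb, hxb⟩ := exists_mem_distToCode_sub_eq hCB x
  have : ¬(distToCode C (x - b) = 0 ∨ distToCode C (x - b) = 3) := fun h =>
    hx (by simpa using D.add_mem ((hD _).2 h) (hBD hb))
  have := hle (x - b)
  omega

theorem mem_iff_distToCode_eq_zero_or_three (hle : ∀ x : ι → F, distToCode C x ≤ 3)
    (hD : ∀ x, x ∈ D ↔ distToCode C x = 0 ∨ distToCode C x = 3) (hCB : C ≤ B) (hBD : B ≤ D)
    {x : ι → F} : x ∈ D ↔ distToCode B x = 0 ∨ distToCode B x = 3 := by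
  refine ⟨fun hx => ?_, fun h => by_contra fun hx => ?_⟩
  · by_cases hxB : x ∈ B
    · exact Or.inl (B.distToCode_eq_zero_iff.2 hxB)
    · exact Or.inr (distToCode_eq_three_of_mem_of_notMem hD hCB hBD hx hxB)
  · have := distToCode_eq_one_or_two_of_notMem hle hD hCB hBD hx
    omega

theorem distToCode_eq_distToCode_sub (hD : ∀ x, x ∈ D ↔ distToCode C x = 0 ∨ distToCode C x = 3)
    (hCB : C ≤ B) (hBD : B ≤ D) {b y : ι → F} (hb : b ∈ B) (h : distToCode C (y - b) ≤ 1) :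
    distToCode B y = distToCode C (y - b) := by
  have hle := distToCode_le_distToCode_sub hCB hb y
  have hB0 : distToCode B y = 0 → distToCode C (y - b) = 0 := fun h0 => by
    have hyD := hBD (B.distToCode_eq_zero_iff.1 h0)
    have := (hD _).1 (D.sub_mem hyD (hBD hb))
    omega
  omega

theorem distToCode_eq_iff_exists_sub {R : Finset (ι → F)}
    (hD : ∀ x, x ∈ D ↔ distToCode C x = 0 ∨ distToCode C x = 3) (hCB : C ≤ B) (hBD : B ≤ D)
    (hR : (B : Set (ι → F)) = ⋃ r ∈ R, (fun v => r + v) '' (C : Set (ι → F)))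
    {j : ℕ} (hj : j ≤ 1) {y : ι → F} :
    distToCode B y = j ↔ ∃ r ∈ R, distToCode C (y - r) = j := by
  constructor
  · rintro rfl
    obtain ⟨b, hb, hyb⟩ := exists_mem_distToCode_sub_eq hCB y
    obtain ⟨r, hr, hbr⟩ := (mem_iff_exists_sub_mem_of_eq_iUnion hR).1 hb
    exact ⟨r, hr, by rw [← hyb, ← sub_add_sub_cancel y b r, distToCode_add_mem hbr]⟩
  · rintro ⟨r, hr, hyr⟩
    rw [← hyr]
    exact distToCode_eq_distToCode_sub hD hCB hBD (mem_of_mem_of_eq_iUnion hR hr) (hyr ▸ hj)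

theorem distToCode_sub_eq_one_or_two (hle : ∀ x : ι → F, distToCode C x ≤ 3)
    (hD : ∀ x, x ∈ D ↔ distToCode C x = 0 ∨ distToCode C x = 3) (hBD : B ≤ D) {x r : ι → F}
    (hx : x ∉ D) (hr : r ∈ B) : distToCode C (x - r) = 1 ∨ distToCode C (x - r) = 2 := by
  have : x - r ∉ D := fun h => hx (by simpa using D.add_mem h (hBD hr))
  rw [hD] at this
  have := hle (x - r)
  omega

end Extension

section Counts

variable [DecidableEq ι] [AddCommGroup F] [Fintype F] {C B D : AddSubgroup (ι → F)}
  {R : Finset (ι → F)} {N q : ℕ}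

theorem nbrCount_eq_sum
    (hCR : IsCompletelyRegular (C : Set (ι → F)) 3 (bArray N q) (cArray N q))
    (hsphere : Fintype.card ι * (Fintype.card F - 1) = N - 1)
    (hD : ∀ x, x ∈ D ↔ distToCode C x = 0 ∨ distToCode C x = 3) (hCB : C ≤ B) (hBD : B ≤ D)
    (hR : (B : Set (ι → F)) = ⋃ r ∈ R, (fun v => r + v) '' (C : Set (ι → F)))
    (hRpair : ∀ x ∈ R, ∀ y ∈ R, x ≠ y → x - y ∉ C) {j : ℕ} (hj : j ≤ 1) (x : ι → F) :
    nbrCount B x j = ∑ r ∈ R, nbrCount C (x - r) j := by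
  simp_rw [nbrCount_sub]
  rw [nbrCount, ← card_biUnion]
  · congr 1
    ext y
    simp only [mem_filter, mem_univ, true_and, mem_biUnion,
      distToCode_eq_iff_exists_sub hD hCB hBD hR hj]
    exact ⟨fun ⟨h, r, hr, hr'⟩ => ⟨r, hr, h, hr'⟩, fun ⟨r, hr, h, hr'⟩ => ⟨h, r, hr, hr'⟩⟩
  · intro r hr r' hr' hne
    refine disjoint_left.2 fun y hy hy' => hRpair r hr r' hr' hne ?_
    rw [mem_filter] at hy hy'
    exact sub_mem_of_distToCode_sub_eq hCR hsphere hD (hBD (mem_of_mem_of_eq_iUnion hR hr))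
      (hBD (mem_of_mem_of_eq_iUnion hR hr'))
      (hy.2.2.trans hy'.2.2.symm) (hy.2.2 ▸ hj)

theorem nbrCount_one_of_mem
    (hCR : IsCompletelyRegular (C : Set (ι → F)) 3 (bArray N q) (cArray N q))
    (hsphere : Fintype.card ι * (Fintype.card F - 1) = N - 1)
    (hD : ∀ x, x ∈ D ↔ distToCode C x = 0 ∨ distToCode C x = 3) (hCB : C ≤ B) (hBD : B ≤ D)
    {x : ι → F} (hx : x ∈ B) : nbrCount B x 1 = N - 1 := by
  rw [← hsphere]
  refine nbrCount_eq_card_iff.2 fun y hxy => ?_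
  have h1 : distToCode C (y - x) = 1 :=
    distToCode_eq_one_of_eq_zero hCR hsphere
      (C.distToCode_eq_zero_iff.2 C.zero_mem)
      (by rwa [← sub_self x, hammingDist_sub_right])
  rw [distToCode_eq_distToCode_sub hD hCB hBD hx h1.le, h1]

theorem nbrCount_two_of_eq_three
    (hCR : IsCompletelyRegular (C : Set (ι → F)) 3 (bArray N q) (cArray N q))
    (hsphere : Fintype.card ι * (Fintype.card F - 1) = N - 1)
    (hD : ∀ x, x ∈ D ↔ distToCode C x = 0 ∨ distToCode C x = 3) (hCB : C ≤ B) (hBD : B ≤ D)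
    {x : ι → F} (hx : distToCode B x = 3) : nbrCount B x 2 = N - 1 := by
  have hxD : x ∈ D := (mem_iff_distToCode_eq_zero_or_three hCR.1 hD hCB hBD).2 (Or.inr hx)
  have hx3 : distToCode C x = 3 := by
    have := (hD x).1 hxD
    have := distToCode_le_distToCode hCB x
    omega
  rw [← hsphere]
  refine nbrCount_eq_card_iff.2 fun y hxy => ?_
  have hy2 := distToCode_eq_two_of_eq_three hCR hsphere hx3 hxy
  have hyD : y ∉ D := fun h => by have := (hD y).1 h; omega
  have := (mem_iff_distToCode_eq_zero_or_three hCR.1 hD hCB hBD).not.1 hyD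
  have := distToCode_le_add_hammingDist ⟨0, B.zero_mem⟩ x y
  have := distToCode_le_distToCode hCB y
  omega

theorem nbrCount_of_eq_one
    (hCR : IsCompletelyRegular (C : Set (ι → F)) 3 (bArray N q) (cArray N q))
    (hsphere : Fintype.card ι * (Fintype.card F - 1) = N - 1)
    (hD : ∀ x, x ∈ D ↔ distToCode C x = 0 ∨ distToCode C x = 3) (hCB : C ≤ B) (hBD : B ≤ D)
    (hR : (B : Set (ι → F)) = ⋃ r ∈ R, (fun v => r + v) '' (C : Set (ι → F)))
    (hRpair : ∀ x ∈ R, ∀ y ∈ R, x ≠ y → x - y ∉ C) {x : ι → F} (hx : distToCode B x = 1) :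
    nbrCount B x 0 = 1 ∧ nbrCount B x 2 = N - R.card * q := by
  obtain ⟨-, -, hb, hc⟩ := isCompletelyRegular_iff_nbrCount.1 hCR
  have hC : (C : Set (ι → F)).Nonempty := ⟨0, C.zero_mem⟩
  have hxD : x ∉ D := fun h => by
    have := (mem_iff_distToCode_eq_zero_or_three hCR.1 hD hCB hBD).1 h
    omega
  obtain ⟨r₀, hr₀, hx₀⟩ := (distToCode_eq_iff_exists_sub hD hCB hBD hR le_rfl).1 hx
  have hother : ∀ r ∈ R.erase r₀, distToCode C (x - r) = 2 := fun r hr => by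
    obtain ⟨hne, hr⟩ := mem_erase.1 hr
    have hne1 : distToCode C (x - r) ≠ 1 := fun h1 => hRpair r hr r₀ hr₀ hne <|
      sub_mem_of_distToCode_sub_eq hCR hsphere hD (hBD (mem_of_mem_of_eq_iUnion hR hr))
        (hBD (mem_of_mem_of_eq_iUnion hR hr₀))
        (h1.trans hx₀.symm) h1.le
    have := distToCode_sub_eq_one_or_two hCR.1 hD hBD hxD (mem_of_mem_of_eq_iUnion hR hr)
    omega
  have h0 : nbrCount B x 0 = 1 := by
    rw [nbrCount_eq_sum hCR hsphere hD hCB hBD hR hRpair zero_le_one,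
      sum_eq_single_of_mem r₀ hr₀ fun r hr hne =>
        nbrCount_eq_zero hC (by rw [hother r (mem_erase.2 ⟨hne, hr⟩)]; omega)]
    exact hc _ 0 hx₀ (by norm_num)
  have h1 : nbrCount B x 1 = nbrCount C (x - r₀) 1 + (R.card - 1) * q := by
    have hq : ∀ r ∈ R.erase r₀, nbrCount C (x - r) 1 = q := fun r hr =>
      hc _ 1 (hother r hr) (by norm_num)
    rw [nbrCount_eq_sum hCR hsphere hD hCB hBD hR hRpair le_rfl, ← add_sum_erase _ _ hr₀,
      sum_congr rfl hq, sum_const, card_erase_of_mem hr₀, smul_eq_mul]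
  have hsumC := sum_nbrCount hCR.1 (x - r₀)
  have hsumB := sum_nbrCount (fun y => (distToCode_le_distToCode hCB y).trans (hCR.1 y)) x
  simp only [sum_range_succ, sum_range_zero, zero_add] at hsumC hsumB
  have hC0 : nbrCount C (x - r₀) 0 = 1 := hc _ 0 hx₀ (by norm_num)
  have hC2 : nbrCount C (x - r₀) 2 = N - q := hb _ 1 hx₀ (by norm_num)
  have hC3 : nbrCount C (x - r₀) 3 = 0 := nbrCount_eq_zero hC (by omega)
  have hB3 : nbrCount B x 3 = 0 := nbrCount_eq_zero ⟨0, B.zero_mem⟩ (by omega)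
  have hk : R.card * q = q + (R.card - 1) * q := by
    obtain ⟨k, hk⟩ : ∃ k, R.card = k + 1 := ⟨_, (Nat.sub_add_cancel (card_pos.2 ⟨r₀, hr₀⟩)).symm⟩
    rw [hk, Nat.add_sub_cancel]
    ring
  refine ⟨h0, ?_⟩
  omega

theorem nbrCount_of_eq_two
    (hCR : IsCompletelyRegular (C : Set (ι → F)) 3 (bArray N q) (cArray N q))
    (hsphere : Fintype.card ι * (Fintype.card F - 1) = N - 1)
    (hD : ∀ x, x ∈ D ↔ distToCode C x = 0 ∨ distToCode C x = 3) (hCB : C ≤ B) (hBD : B ≤ D)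
    (hR : (B : Set (ι → F)) = ⋃ r ∈ R, (fun v => r + v) '' (C : Set (ι → F)))
    (hRpair : ∀ x ∈ R, ∀ y ∈ R, x ≠ y → x - y ∉ C) {x : ι → F} (hx : distToCode B x = 2) :
    nbrCount B x 1 = R.card * q ∧ nbrCount B x 3 = 1 := by
  obtain ⟨-, -, hb, hc⟩ := isCompletelyRegular_iff_nbrCount.1 hCR
  have hxD : x ∉ D := fun h => by
    have := (mem_iff_distToCode_eq_zero_or_three hCR.1 hD hCB hBD).1 h
    omega
  have hall : ∀ r ∈ R, distToCode C (x - r) = 2 := fun r hr => by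
    have hne1 : distToCode C (x - r) ≠ 1 := fun h1 => by
      have := (distToCode_eq_iff_exists_sub hD hCB hBD hR le_rfl).2 ⟨r, hr, h1⟩
      omega
    have := distToCode_sub_eq_one_or_two hCR.1 hD hBD hxD (mem_of_mem_of_eq_iUnion hR hr)
    omega
  refine ⟨?_, ?_⟩
  · rw [nbrCount_eq_sum hCR hsphere hD hCB hBD hR hRpair le_rfl,
      sum_congr rfl fun r hr => hc _ 1 (hall r hr) (by norm_num), sum_const, smul_eq_mul]
    rfl
  · have hx2 : distToCode C x = 2 := by
      have := distToCode_le_distToCode hCB x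
      have := (hD x).not.1 hxD
      have := hCR.1 x
      omega
    have hmemB : ∀ y, y ∈ D ↔ distToCode B y = 0 ∨ distToCode B y = 3 := fun y =>
      mem_iff_distToCode_eq_zero_or_three hCR.1 hD hCB hBD
    have hC3 : nbrCount C x 3 = 1 := hb x 2 hx2 (by norm_num)
    rw [← hC3, nbrCount, nbrCount]
    refine congrArg card <| filter_congr fun y _ => and_congr_right fun hxy =>
      ⟨fun hy => ?_, fun hy => ?_⟩
    · have := (hD y).1 ((hmemB y).2 (Or.inr hy))
      have := distToCode_le_distToCode hCB y
      omega
    · have := (hmemB y).1 ((hD y).2 (Or.inr hy))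
      have := distToCode_le_add_hammingDist ⟨0, B.zero_mem⟩ x y
      omega

end Counts

theorem isCompletelyRegular_of_eq_iUnion [DecidableEq ι] [AddCommGroup F] [Fintype F]
    {C B D : AddSubgroup (ι → F)} {R : Finset (ι → F)} {N q : ℕ}
    (hCR : IsCompletelyRegular (C : Set (ι → F)) 3 (bArray N q) (cArray N q))
    (hsphere : Fintype.card ι * (Fintype.card F - 1) = N - 1)
    (hD : ∀ x, x ∈ D ↔ distToCode C x = 0 ∨ distToCode C x = 3) (hCB : C ≤ B) (hBD : B < D)
    (hR : (B : Set (ι → F)) = ⋃ r ∈ R, (fun v => r + v) '' (C : Set (ι → F)))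
    (hRpair : ∀ x ∈ R, ∀ y ∈ R, x ≠ y → x - y ∉ C) :
    IsCompletelyRegular (B : Set (ι → F)) 3 (bArray N (R.card * q)) (cArray N (R.card * q)) := by
  obtain ⟨g, hgD, hgB⟩ := SetLike.exists_of_lt hBD
  refine isCompletelyRegular_iff_nbrCount.2
    ⟨fun x => (distToCode_le_distToCode hCB x).trans (hCR.1 x),
      ⟨g, distToCode_eq_three_of_mem_of_notMem hD hCB hBD.le hgD hgB⟩, fun x i hx hi => ?_,
      fun x i hx hi => ?_⟩
  · obtain rfl | rfl | rfl : i = 0 ∨ i = 1 ∨ i = 2 := by omega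
    · exact nbrCount_one_of_mem hCR hsphere hD hCB hBD.le
        (B.distToCode_eq_zero_iff.1 hx)
    · exact (nbrCount_of_eq_one hCR hsphere hD hCB hBD.le hR hRpair hx).2
    · exact (nbrCount_of_eq_two hCR hsphere hD hCB hBD.le hR hRpair hx).2
  · obtain rfl | rfl | rfl : i = 0 ∨ i = 1 ∨ i = 2 := by omega
    · exact (nbrCount_of_eq_one hCR hsphere hD hCB hBD.le hR hRpair hx).1
    · exact (nbrCount_of_eq_two hCR hsphere hD hCB hBD.le hR hRpair hx).1
    · exact nbrCount_two_of_eq_three hCR hsphere hD hCB hBD.le hx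

end Words

theorem stmt_18_general (p q m n : ℕ)
    (hp : ∃ s, 1 ≤ s ∧ p = 2 ^ s)
    (hqle : q ≤ p ^ (2 * m)) (hn : n = (p ^ (2 * m) - 1) / (p - 1))
    (F : Type) [Field F] [Fintype F] [DecidableEq F] (hcF : Fintype.card F = p)
    (C : AddSubgroup (Fin n → F))
    (hCR : IsCompletelyRegular (C : Set (Fin n → F)) 3
      (fun i => if i = 0 then p ^ (2 * m) - 1 else if i = 1 then p ^ (2 * m) - q else 1)
      (fun i => if i = 1 then 1 else if i = 2 then q else p ^ (2 * m) - 1)) :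
    ∀ k : ℕ, (∃ j, k = 2 ^ j) → 1 ≤ k → k ≤ p ^ (2 * m) / q - 1 →
      ∃ (B : AddSubgroup (Fin n → F)) (R : Finset (Fin n → F)),
        R.card = k ∧
        (∀ x ∈ R, ∀ y ∈ R, x ≠ y → x - y ∉ C) ∧
        (B : Set (Fin n → F)) = ⋃ x ∈ R, (fun v => x + v) '' (C : Set (Fin n → F)) ∧
        IsCompletelyRegular (B : Set (Fin n → F)) 3
          (fun i => if i = 0 then p ^ (2 * m) - 1
                    else if i = 1 then p ^ (2 * m) - k * q else 1)
          (fun i => if i = 1 then 1 else if i = 2 then k * q else p ^ (2 * m) - 1) := by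
  rintro k ⟨j, rfl⟩ hk1 hkle
  obtain ⟨s, -, hps⟩ := hp
  have h2 : ∀ x : Fin n → F, x + x = 0 := fun x =>
    funext fun i => add_self_eq_zero_of_card_eq_two_pow (hcF.trans hps) (x i)
  have hsphere : Fintype.card (Fin n) * (Fintype.card F - 1) = p ^ (2 * m) - 1 := by
    rw [Fintype.card_fin, hcF, hn]
    exact Nat.div_mul_cancel (by simpa using Nat.sub_dvd_pow_sub_pow p 1 (2 * m))
  obtain ⟨D, hD⟩ := exists_addSubgroup_mem_iff hCR hsphere
  have hCD : C ≤ D := fun c hc => (hD c).2 (Or.inl (C.distToCode_eq_zero_iff.2 hc))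
  have hq : 0 < q := Nat.pos_of_ne_zero fun hq => by simp [hq] at hkle
  have hkq : (2 ^ j + 1) * q ≤ p ^ (2 * m) :=
    (Nat.mul_le_mul_right q (by omega)).trans (Nat.div_mul_le_self _ q)
  have hcard := card_mul_eq_mul_card hCR hD hqle (by nlinarith)
  have hlt : 2 ^ j * Nat.card C < Nat.card D := by
    have : 0 < Nat.card C := Nat.card_pos
    nlinarith
  obtain ⟨B, hCB, hBD, hB⟩ := exists_addSubgroup_card_eq_two_pow_mul h2 hCD hlt.le
  obtain ⟨R, hR, hRpair, hRB⟩ := exists_finset_eq_iUnion hCB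
  have hRcard : R.card = 2 ^ j := Nat.eq_of_mul_eq_mul_right Nat.card_pos (hR.trans hB)
  refine ⟨B, R, hRcard, hRpair, hRB, hRcard ▸ ?_⟩
  exact isCompletelyRegular_of_eq_iUnion hCR hsphere hD hCB
    (lt_of_le_of_ne hBD (by rintro rfl; omega)) hRB hRpair

/-- Let `p`, `q` be powers of 2 with `q ≤ p^{2m}`, `n = (p^{2m}−1)/(p−1)`,
and let `C ⊆ F_p^n` be an additive code which is completely regular with covering radius 3
and intersection array `{p^{2m}−1, p^{2m}−q, 1; 1, q, p^{2m}−1}`.  Then for every `k` which is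
a power of 2 with `1 ≤ k ≤ p^{2m}/q − 1` there is an ADDITIVE code `B_k ⊆ F_p^n`
(a subgroup of `(F_p^n, +)`) which is a union of exactly `k` (pairwise distinct) cosets
of `C` and is completely regular with covering radius 3 and
intersection array `{p^{2m}−1, p^{2m}−kq, 1; 1, kq, p^{2m}−1}`. -/
theorem stmt_18 (p q m n : ℕ)
    (hp : ∃ s, 1 ≤ s ∧ p = 2 ^ s) (hq : ∃ s, 1 ≤ s ∧ q = 2 ^ s)
    (hqle : q ≤ p ^ (2 * m)) (hn : n = (p ^ (2 * m) - 1) / (p - 1))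
    (F : Type) [Field F] [Fintype F] [DecidableEq F] (hcF : Fintype.card F = p)
    (C : AddSubgroup (Fin n → F))
    (hCR : IsCompletelyRegular (C : Set (Fin n → F)) 3
      (fun i => if i = 0 then p ^ (2 * m) - 1 else if i = 1 then p ^ (2 * m) - q else 1)
      (fun i => if i = 1 then 1 else if i = 2 then q else p ^ (2 * m) - 1)) :
    ∀ k : ℕ, (∃ j, k = 2 ^ j) → 1 ≤ k → k ≤ p ^ (2 * m) / q - 1 →
      ∃ (B : AddSubgroup (Fin n → F)) (R : Finset (Fin n → F)),
        R.card = k ∧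
        (∀ x ∈ R, ∀ y ∈ R, x ≠ y → x - y ∉ C) ∧
        (B : Set (Fin n → F)) = ⋃ x ∈ R, (fun v => x + v) '' (C : Set (Fin n → F)) ∧
        IsCompletelyRegular (B : Set (Fin n → F)) 3
          (fun i => if i = 0 then p ^ (2 * m) - 1
                    else if i = 1 then p ^ (2 * m) - k * q else 1)
          (fun i => if i = 1 then 1 else if i = 2 then k * q else p ^ (2 * m) - 1) :=
  stmt_18_general p q m n hp hqle hn F hcF C hCR
end

section
/- Let m ≥ 1, q = 2^m, α a primitive element of F_{q²} and ζ = α^{q−1}. For each j ∈ {1,…,q+1}, write ζ^j = γ_{j,0} + γ_{j,1}·α with γ_{j,0}, γ_{j,1} ∈ F_q (coordinates with respect to the basis {1, α} of F_{q²} over F_q). Then for every word c = (c_1,…,c_{q+1}) ∈ F_q^{q+1} satisfying Σ_{j=1}^{q+1} c_j ζ^j = 0, one has (Σ_{j=1}^{q+1} c_j)² = (α + α^q) · Σ_{j=1}^{q+1} c_j² γ_{j,0} γ_{j,1}. In particular, since α + α^q ≠ 0, for such c the condition Σ_j c_j = 0 is equivalent to Σ_j c_j² γ_{j,0} γ_{j,1}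 = 0. -/
open Finset

/-- Let `m ≥ 1`, `q = 2^m`, `α` primitive in `K = F_{q²}`, `ζ = α^(q−1)`,
and write `ζ^j = γ_{j,0} + γ_{j,1}·α` with `γ_{j,0}, γ_{j,1} ∈ F = F_q` (coordinates with
respect to the basis `{1, α}` of `K` over `F`).  Then for every word
`c = (c_1,…,c_{q+1}) ∈ F^{q+1}` with `Σ_j c_j ζ^j = 0` one has
`(Σ_j c_j)² = (α + α^q)·Σ_j c_j² γ_{j,0} γ_{j,1}`; in particular `α + α^q ≠ 0` and, for
such `c`, `Σ_j c_j = 0 ↔ Σ_j c_j² γ_{j,0} γ_{j,1} = 0`. -/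
theorem stmt_19 (m q : ℕ) (hm : 1 ≤ m) (hq : q = 2 ^ m)
    (F K : Type) [Field F] [Field K] [Fintype F] [Fintype K] [Algebra F K]
    (hcF : Fintype.card F = q) (hcK : Fintype.card K = q ^ 2)
    (α : K) (hα : orderOf α = q ^ 2 - 1)
    (ζ : K) (hζ : ζ = α ^ (q - 1))
    (g0 g1 : K → F)
    (hcoord : ∀ x : K, algebraMap F K (g0 x) + algebraMap F K (g1 x) * α = x)
    (huniq : ∀ (x : K) (γ0 γ1 : F),
      algebraMap F K γ0 + algebraMap F K γ1 * α = x → γ0 = g0 x ∧ γ1 = g1 x) :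
    α + α ^ q ≠ 0 ∧
    ∀ c : Fin (q + 1) → F,
      (∑ j : Fin (q + 1), algebraMap F K (c j) * ζ ^ ((j : ℕ) + 1)) = 0 →
      (algebraMap F K (∑ j : Fin (q + 1), c j)) ^ 2
        = (α + α ^ q) * algebraMap F K (∑ j : Fin (q + 1),
            c j ^ 2 * g0 (ζ ^ ((j : ℕ) + 1)) * g1 (ζ ^ ((j : ℕ) + 1))) ∧
      ((∑ j : Fin (q + 1), c j) = 0 ↔
        (∑ j : Fin (q + 1),
          c j ^ 2 * g0 (ζ ^ ((j : ℕ) + 1)) * g1 (ζ ^ ((j : ℕ) + 1))) = 0) := by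
  have hq2 : 2 ≤ q := by
    have : 2 ^ 1 ≤ 2 ^ m := Nat.pow_le_pow_right (by norm_num) hm
    omega
  -- characteristic 2
  haveI hfact : Fact (Nat.Prime 2) := ⟨Nat.prime_two⟩
  obtain ⟨p, hp⟩ := CharP.exists K
  haveI := hp
  obtain ⟨n, hpp, hcard⟩ := FiniteField.card K p
  have hp2 : p = 2 := by
    have hdvd : p ∣ 2 ^ (m * 2) := by
      have : 2 ^ (m * 2) = p ^ (n : ℕ) := by
        rw [← hcard, hcK, hq, ← pow_mul]
      rw [this]
      exact dvd_pow_self p n.pos.ne'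
    exact (Nat.prime_dvd_prime_iff_eq hpp Nat.prime_two).mp (hpp.dvd_of_dvd_pow hdvd)
  subst hp2
  haveI hK2 : CharP K 2 := hp
  -- basic facts
  have hF : ∀ a : F, a ^ q = a := fun a => by rw [← hcF]; exact FiniteField.pow_card a
  have halg : ∀ a : F, (algebraMap F K a) ^ q = algebraMap F K a := fun a => by
    rw [← map_pow, hF]
  have haddq : ∀ x y : K, (x + y) ^ q = x ^ q + y ^ q := fun x y => by
    rw [hq]; exact add_pow_char_pow x y 2 m
  have hq4 : q + 2 ≤ q ^ 2 := by nlinarith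
  have hα0 : α ≠ 0 := by
    intro h0
    have h1 := pow_orderOf_eq_one α
    rw [hα, h0, zero_pow (by omega : q ^ 2 - 1 ≠ 0)] at h1
    exact zero_ne_one h1
  have hαq : α ^ q ≠ α := by
    intro h
    have h1 : α ^ (q - 1) * α = α := by
      rw [← pow_succ]
      have : q - 1 + 1 = q := by omega
      rw [this, h]
    have h2 : α ^ (q - 1) = 1 := by
      have := mul_right_cancel₀ hα0 (h1.trans (one_mul α).symm)
      exact this
    have h3 : q ^ 2 - 1 ∣ q - 1 := hα ▸ orderOf_dvd_of_pow_eq_one h2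
    have h4 : q ^ 2 - 1 ≤ q - 1 := Nat.le_of_dvd (by omega) h3
    omega
  have hT : α + α ^ q ≠ 0 := by
    intro h
    apply hαq
    have := CharTwo.neg_eq (α ^ q)
    have : α = α ^ q := by
      have h' := h
      rw [add_eq_zero_iff_eq_neg, CharTwo.neg_eq] at h'
      exact h'
    exact this.symm
  refine ⟨hT, fun c hc => ?_⟩
  -- notation
  have hmul : (q - 1) * (q + 1) = q ^ 2 - 1 := by
    zify [show 1 ≤ q by omega, show 1 ≤ q ^ 2 by nlinarith]
    ring
  have hz1 : ζ ^ (q + 1) = 1 := by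
    rw [hζ, ← pow_mul, hmul, ← hα, pow_orderOf_eq_one]
  have hnorm : ∀ j : ℕ, (ζ ^ (j + 1)) ^ (q + 1) = 1 := fun j => by
    rw [← pow_mul, mul_comm, pow_mul, hz1, one_pow]
  set A : Fin (q + 1) → F := fun j => g0 (ζ ^ ((j : ℕ) + 1)) with hA
  set B : Fin (q + 1) → F := fun j => g1 (ζ ^ ((j : ℕ) + 1)) with hB
  -- the coordinate sums vanish
  have hsum : algebraMap F K (∑ j, c j * A j) + algebraMap F K (∑ j, c j * B j) * α = 0 := by
    rw [← hc, map_sum, map_sum, Finset.sum_mul, ← Finset.sum_add_distrib]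
    refine Finset.sum_congr rfl fun j _ => ?_
    conv_rhs => rw [← hcoord (ζ ^ ((j : ℕ) + 1))]
    rw [map_mul, map_mul]
    ring
  obtain ⟨h0, h1⟩ := huniq 0 _ _ hsum
  obtain ⟨h0', h1'⟩ := huniq 0 0 0 (by simp)
  have hS0 : (∑ j, c j * A j) = 0 := by rw [h0, ← h0']
  have hS1 : (∑ j, c j * B j) = 0 := by rw [h1, ← h1']
  -- per-term norm identity
  have hterm : ∀ j : Fin (q + 1),
      (algebraMap F K (c j)) ^ 2
        = (algebraMap F K (c j * A j)) ^ 2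
          + (α + α ^ q) * algebraMap F K (c j ^ 2 * A j * B j)
          + α ^ (q + 1) * (algebraMap F K (c j * B j)) ^ 2 := by
    intro j
    have hx : algebraMap F K (A j) + algebraMap F K (B j) * α = ζ ^ ((j : ℕ) + 1) :=
      hcoord _
    have hxq : (algebraMap F K (A j) + algebraMap F K (B j) * α) ^ q
        = algebraMap F K (A j) + algebraMap F K (B j) * α ^ q := by
      rw [haddq, mul_pow, halg, halg]
    have hprod : (algebraMap F K (A j) + algebraMap F K (B j) * α ^ q)
        * (algebraMap F K (A j) + algebraMap F K (B j) * α) = 1 := by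
      rw [← hxq, ← pow_succ, hx]
      exact hnorm (j : ℕ)
    calc (algebraMap F K (c j)) ^ 2
        = (algebraMap F K (c j)) ^ 2 * ((algebraMap F K (A j) + algebraMap F K (B j) * α ^ q)
            * (algebraMap F K (A j) + algebraMap F K (B j) * α)) := by rw [hprod, mul_one]
      _ = _ := by
          simp only [map_mul, map_pow]
          ring
  -- sum it up
  have key : (algebraMap F K (∑ j : Fin (q + 1), c j)) ^ 2
      = (α + α ^ q) * algebraMap F K (∑ j : Fin (q + 1), c j ^ 2 * A j * B j) := by
    have e1 : (algebraMap F K (∑ j : Fin (q + 1), c j)) ^ 2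
        = ∑ j : Fin (q + 1), (algebraMap F K (c j)) ^ 2 := by
      rw [map_sum, sum_pow_char 2]
    rw [e1]
    have e2 : ∑ j : Fin (q + 1), (algebraMap F K (c j)) ^ 2
        = (∑ j : Fin (q + 1), (algebraMap F K (c j * A j)) ^ 2)
          + (α + α ^ q) * (∑ j : Fin (q + 1), algebraMap F K (c j ^ 2 * A j * B j))
          + α ^ (q + 1) * (∑ j : Fin (q + 1), (algebraMap F K (c j * B j)) ^ 2) := by
      rw [Finset.mul_sum, Finset.mul_sum, ← Finset.sum_add_distrib, ← Finset.sum_add_distrib]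
      exact Finset.sum_congr rfl fun j _ => hterm j
    rw [e2]
    have eA : (∑ j : Fin (q + 1), (algebraMap F K (c j * A j)) ^ 2) = 0 := by
      rw [← sum_pow_char 2, ← map_sum, hS0, map_zero]
      norm_num
    have eB : (∑ j : Fin (q + 1), (algebraMap F K (c j * B j)) ^ 2) = 0 := by
      rw [← sum_pow_char 2, ← map_sum, hS1, map_zero]
      norm_num
    rw [eA, eB, map_sum]
    ring
  refine ⟨key, ?_⟩
  have hinj := (algebraMap F K).injective
  constructor
  · intro h
    rw [h, map_zero, zero_pow (by norm_num : 2 ≠ 0)] at key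
    have : algebraMap F K (∑ j : Fin (q + 1), c j ^ 2 * A j * B j) = 0 := by
      rcases mul_eq_zero.mp key.symm with h' | h'
      · exact absurd h' hT
      · exact h'
    have := hinj (by rw [this, map_zero] : algebraMap F K _ = algebraMap F K 0)
    exact this
  · intro h
    rw [h, map_zero, mul_zero, pow_eq_zero_iff (by norm_num : 2 ≠ 0)] at key
    exact hinj (by rw [key, map_zero] : algebraMap F K _ = algebraMap F K 0)
end
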